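/- arXiv:1207.0373 — 2 statements merged into one kernel-verified Lean document; each statement's English description precedes it below -/
import Mathlib

section
/- The van den Berg–Kesten inequality: for a finite product of Bernoulli measures on {0,1}^n and any two increasing events A and B, the probability of the disjoint occurrence A □ B satisfies P(A □ B) ≤ P(A) · P(B). -/
/-!
Take two independent copies `(ω, ω')` of the configuration. For increasing events, `ω ∈ A □ B`
means that some `σ ≤ ω` lies in `A` and the rest `ω \ σ` lies in `B`. Now test `B` on
`ω'` on a set `S` of coordinates and on `ω \ σ` off `S`: for `S = ∅` this event is
`(A □ B) × Ω`, for `S = univ` it is `A × B`. Adding one coordinate `j` to `S` never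
decreases its probability: every pair lost in the process is mapped, by exchanging the `j`-th
coordinates of `ω` and `ω'`, to a pair gained, and this exchange preserves the product measure.
-/

open MeasureTheory

noncomputable section

/-- The cylinder of configurations agreeing with `ω` on `K`. -/
def cylinder {n : ℕ} (ω : Fin n → Bool) (K : Set (Fin n)) : Set (Fin n → Bool) :=
  {ω' | ∀ i ∈ K, ω' i = ω i}

/-- The disjoint occurrence `A □ B`: configurations `ω` admitting disjoint witness sets
`K, L` of coordinates with `[ω]_K ⊆ A` and `[ω]_L ⊆ B`. -/
def disjOcc {n : ℕ} (A B : Set (Fin n → Bool)) : Set (Fin n → Bool) :=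
  {ω | ∃ K L : Set (Fin n), Disjoint K L ∧ cylinder ω K ⊆ A ∧ cylinder ω L ⊆ B}

/-- An increasing event: closed upwards in the coordinatewise partial order. -/
def IncreasingEvent {n : ℕ} (A : Set (Fin n → Bool)) : Prop :=
  ∀ ω ω' : Fin n → Bool, ω ≤ ω' → ω ∈ A → ω' ∈ A

open Function

section SwapAt

variable {ι α : Type*} [DecidableEq ι]

def swapAt (j : ι) (z : (ι → α) × (ι → α)) : (ι → α) × (ι → α) :=
  (update z.1 j (z.2 j), update z.2 j (z.1 j))

theorem swapAt_involutive (j : ι) : Involutive (swapAt (α := α) j) := by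
  rintro ⟨ω, ω'⟩
  ext i <;> by_cases h : i = j <;> simp [swapAt, h]

theorem measurePreserving_swapAt [Fintype ι] [MeasurableSpace α] (μ : ι → Measure α)
    [∀ i, SigmaFinite (μ i)] (j : ι) :
    MeasurePreserving (swapAt j) ((Measure.pi μ).prod (Measure.pi μ))
      ((Measure.pi μ).prod (Measure.pi μ)) := by
  let e := MeasurableEquiv.arrowProdEquivProdArrow α α ι
  have he := measurePreserving_arrowProdEquivProdArrow α α ι μ μ
  have hswap : ∀ i, MeasurePreserving (if i = j then Prod.swap else id)
      ((μ i).prod (μ i)) ((μ i).prod (μ i)) := fun i => by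
    split_ifs
    · exact Measure.measurePreserving_swap
    · exact MeasurePreserving.id _
  have hconj : swapAt j = e ∘ (fun a i => (if i = j then Prod.swap else id) (a i)) ∘ e.symm := by
    ext ⟨ω, ω'⟩ i <;> by_cases h : i = j <;>
      simp [swapAt, h, e, MeasurableEquiv.arrowProdEquivProdArrow, Equiv.arrowProdEquivProdArrow]
  rw [hconj]
  exact he.comp ((measurePreserving_pi _ _ hswap).comp he.symm)

end SwapAt

theorem MeasureTheory.MeasurePreserving.measure_le_of_diff_subset_preimage
    {X : Type*} [MeasurableSpace X] {μ : Measure X} {f : X → X} (hf : MeasurePreserving f μ μ)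
    {E F : Set X} (hE : MeasurableSet E) (hF : MeasurableSet F) (h : E \ F ⊆ f ⁻¹' (F \ E)) :
    μ E ≤ μ F :=
  calc μ E = μ (E ∩ F) + μ (E \ F) := (measure_inter_add_sdiff E hF).symm
    _ ≤ μ (F ∩ E) + μ (F \ E) := by
      rw [Set.inter_comm, ← hf.measure_preimage (hF.diff hE).nullMeasurableSet]
      gcongr
    _ = μ F := measure_inter_add_sdiff F hE

section SplitEvent

theorem Bool.sdiff_eq (a b : Bool) : a \ b = (a && !b) := rfl

variable {n : ℕ}

theorem le_of_mem_cylinder {ω ω' τ : Fin n → Bool} (hτ : τ ≤ ω)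
    (hω' : ω' ∈ cylinder ω {i | τ i = true}) : τ ≤ ω' := by
  intro i
  cases h : τ i
  · exact Bool.false_le _
  · rw [hω' i h, ← h]
    exact hτ i

theorem mem_disjOcc_iff {A B : Set (Fin n → Bool)} (hA : IncreasingEvent A)
    (hB : IncreasingEvent B) {ω : Fin n → Bool} :
    ω ∈ disjOcc A B ↔ ∃ σ ≤ ω, σ ∈ A ∧ ω \ σ ∈ B := by
  classical
  constructor
  · rintro ⟨K, L, hKL, hKA, hLB⟩
    refine ⟨fun i => decide (i ∈ K) && ω i, fun i => Bool.and_le_right _ _,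
      hKA fun i hi => by simp [hi], hLB fun i hi => ?_⟩
    simp [Bool.sdiff_eq, Set.disjoint_right.mp hKL hi]
  · rintro ⟨σ, hσω, hσA, hσB⟩
    refine ⟨{i | σ i = true}, {i | (ω \ σ) i = true}, ?_,
      fun ω' hω' => hA _ _ (le_of_mem_cylinder hσω hω') hσA,
      fun ω' hω' => hB _ _ (le_of_mem_cylinder sdiff_le hω') hσB⟩
    exact Set.disjoint_left.mpr fun i hσi hi => by simp_all [Bool.sdiff_eq]

def IsSplitWitness (A B : Set (Fin n → Bool)) (S : Finset (Fin n))
    (z : (Fin n → Bool) × (Fin n → Bool)) (σ : Fin n → Bool) : Prop :=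
  σ ≤ z.1 ∧ σ ∈ A ∧ S.piecewise z.2 (z.1 \ σ) ∈ B

def splitEvent (A B : Set (Fin n → Bool)) (S : Finset (Fin n)) :
    Set ((Fin n → Bool) × (Fin n → Bool)) :=
  {z | ∃ σ, IsSplitWitness A B S z σ}

variable {A B : Set (Fin n → Bool)} {S : Finset (Fin n)} {j : Fin n}
  {z : (Fin n → Bool) × (Fin n → Bool)} {σ : Fin n → Bool}

theorem splitEvent_empty (hA : IncreasingEvent A) (hB : IncreasingEvent B) :
    splitEvent A B ∅ = disjOcc A B ×ˢ Set.univ := by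
  ext z
  simp [splitEvent, IsSplitWitness, mem_disjOcc_iff hA hB]

theorem splitEvent_univ (hA : IncreasingEvent A) : splitEvent A B Finset.univ = A ×ˢ B := by
  ext z
  simp only [splitEvent, IsSplitWitness, Finset.piecewise_univ, Set.mem_prod]
  constructor
  · rintro ⟨σ, hσ, hσA, hzB⟩
    exact ⟨hA _ _ hσ hσA, hzB⟩
  · rintro ⟨hzA, hzB⟩
    exact ⟨z.1, le_rfl, hzA, hzB⟩

theorem IsSplitWitness.insert_of_le (hB : IncreasingEvent B) (hσ : IsSplitWitness A B S z σ)
    (hj : z.1 j \ σ j ≤ z.2 j) : IsSplitWitness A B (insert j S) z σ := by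
  refine ⟨hσ.1, hσ.2.1, hB _ _ (fun i => ?_) hσ.2.2⟩
  rw [Finset.piecewise_insert]
  by_cases h : i = j
  · subst h
    by_cases hi : i ∈ S <;> simp [hi, hj]
  · simp [h]

theorem IsSplitWitness.swapAt (hj : j ∉ S) (hσ : IsSplitWitness A B S z σ) (hσj : σ j = false) :
    IsSplitWitness A B (insert j S) (swapAt j z) σ := by
  refine ⟨fun i => ?_, hσ.2.1, ?_⟩
  · by_cases h : i = j
    · simp [h, hσj]
    · simpa [_root_.swapAt, h] using hσ.1 i
  · convert hσ.2.2 using 1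
    ext i
    by_cases h : i = j
    · simp [_root_.swapAt, h, hj, hσj, Bool.sdiff_eq]
    · by_cases hi : i ∈ S <;> simp [_root_.swapAt, Finset.piecewise, h, hi]

theorem splitEvent_diff_subset (hB : IncreasingEvent B) (hj : j ∉ S) :
    splitEvent A B S \ splitEvent A B (insert j S) ⊆
      swapAt j ⁻¹' (splitEvent A B (insert j S) \ splitEvent A B S) := by
  rintro z ⟨⟨σ, hσ⟩, hzF⟩
  have hle : ¬ z.1 j \ σ j ≤ z.2 j := fun hle => hzF ⟨σ, hσ.insert_of_le hB hle⟩
  obtain ⟨hσj, hz₂⟩ : σ j = false ∧ z.2 j = false := by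
    revert hle; cases z.1 j <;> cases σ j <;> cases z.2 j <;> decide
  refine ⟨⟨σ, hσ.swapAt hj hσj⟩, fun ⟨τ, hτ⟩ => hzF ?_⟩
  have hτj : τ j = false :=
    Bool.eq_false_of_le_false (by simpa [_root_.swapAt, hz₂] using hτ.1 j)
  have hτ' := hτ.swapAt hj hτj
  rw [swapAt_involutive j z] at hτ'
  exact ⟨τ, hτ'⟩

theorem measure_splitEvent_empty_le (μ : Fin n → Measure Bool) [∀ i, SigmaFinite (μ i)]
    (hB : IncreasingEvent B) (S : Finset (Fin n)) :
    (Measure.pi μ).prod (Measure.pi μ) (splitEvent A B ∅) ≤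
      (Measure.pi μ).prod (Measure.pi μ) (splitEvent A B S) := by
  induction S using Finset.induction_on with
  | empty => rfl
  | insert j S hj ih =>
    exact ih.trans <| (measurePreserving_swapAt μ j).measure_le_of_diff_subset_preimage
      .of_discrete .of_discrete (splitEvent_diff_subset hB hj)

end SplitEvent

theorem vdBerg_Kesten_general {n : ℕ} (μ : Fin n → Measure Bool)
    [∀ i, IsProbabilityMeasure (μ i)]
    (A B : Set (Fin n → Bool))
    (hAinc : IncreasingEvent A) (hBinc : IncreasingEvent B) :
    Measure.pi μ (disjOcc A B) ≤ Measure.pi μ A * Measure.pi μ B :=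
  calc Measure.pi μ (disjOcc A B)
      = (Measure.pi μ).prod (Measure.pi μ) (splitEvent A B ∅) := by
        rw [splitEvent_empty hAinc hBinc, Measure.prod_prod, measure_univ, mul_one]
    _ ≤ (Measure.pi μ).prod (Measure.pi μ) (splitEvent A B Finset.univ) :=
        measure_splitEvent_empty_le μ hBinc _
    _ = Measure.pi μ A * Measure.pi μ B := by
        rw [splitEvent_univ hAinc, Measure.prod_prod]

/-- **The van den Berg–Kesten inequality**: for a product of Bernoulli measures on `{0,1}ⁿ`
and increasing events `A, B`, one has `P(A □ B) ≤ P(A) · P(B)`. -/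
theorem vdBerg_Kesten {n : ℕ} (μ : Fin n → Measure Bool)
    [∀ i, IsProbabilityMeasure (μ i)]
    (A B : Set (Fin n → Bool))
    (hA : MeasurableSet A) (hB : MeasurableSet B)
    (hAinc : IncreasingEvent A) (hBinc : IncreasingEvent B) :
    Measure.pi μ (disjOcc A B) ≤ Measure.pi μ A * Measure.pi μ B :=
  vdBerg_Kesten_general μ A B hAinc hBinc

end
end

section
/- Lipschitz percolation: for bond-free site percolation on Z^d (d ≥ 2) in which each site is open with probability p independently, there exists p < 1 such that, almost surely, there is a (random) Lipschitz function F : Z^{d−1} → Z with |F(x) − F(y)| ≤ 1 whenever |x − y| = 1, such that every site (x, F(x)) is open. -/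
/-!
Call a site reachable if it can be entered from the half-space `{height ≤ 0}` by a path of
steps that go up or down by one, with horizontal displacement in `{-1, 0, 1}ᵈ⁻¹`, and whose
upward steps all enter closed sites. If every column has an unreachable site, the lowest
unreachable site of each column gives a Lipschitz surface of open sites. A self-avoiding such
path of length `n` ending at height `h` enters at least `(n + h) / 2` distinct closed sites, so
if sites are closed with probability `r²` and there are `C` possible steps, then `(x, h)` is
reachable with probability at most `rʰ ∑ₙ (C r)ⁿ`, which tends to `0` as `h → ∞` once `C r < 1`.
-/

open MeasureTheory Filter ProbabilityTheory Topology
open scoped ENNReal NNReal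

namespace LipschitzPercolation

lemma tsum_pow_length {α : Type*} [Fintype α] (r : ℝ≥0∞) :
    ∑' l : List α, r ^ l.length = ∑' n : ℕ, (Fintype.card α * r) ^ n := by
  rw [← (Equiv.sigmaFiberEquiv List.length).tsum_eq, ENNReal.tsum_sigma']
  congr 1 with n
  calc ∑' l : {l : List α // l.length = n}, r ^ (l : List α).length
      = ∑' _ : List.Vector α n, r ^ n := tsum_congr fun l => by rw [l.2]
    _ = (Fintype.card α * r) ^ n := by
      rw [tsum_fintype, Finset.sum_const, Finset.card_univ, card_vector, nsmul_eq_mul,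
        Nat.cast_pow, mul_pow]

lemma measure_forall_eq_pow {Ω ι β : Type*} [MeasurableSpace Ω] {P : Measure Ω}
    [MeasurableSpace β] [MeasurableSingletonClass β] {X : ι → Ω → β} (hX : iIndepFun X P)
    {b : β} {q : ℝ≥0∞} (hq : ∀ i, P {ω | X i ω = b} = q) (S : Finset ι) :
    P {ω | ∀ i ∈ S, X i ω = b} = q ^ S.card := by
  have hS : {ω | ∀ i ∈ S, X i ω = b} = ⋂ i ∈ S, X i ⁻¹' {b} := by ext; simp
  rw [hS, hX.meas_biInter fun i _ => ⟨{b}, measurableSet_singleton b, rfl⟩]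
  exact Finset.prod_eq_pow_card fun i _ => hq i

abbrev Site (k : ℕ) := (Fin k → ℤ) × ℤ

/-- Paths are read backwards from their endpoint: a move records whether the step into the
current site goes up, and its horizontal displacement in `{-1, 0, 1}ᵏ`. -/
abbrev Move (k : ℕ) := Bool × (Fin k → Set.Icc (-1 : ℤ) 1)

variable {k : ℕ}

def stepBack (v : Site k) (m : Move k) : Site k :=
  (fun i => v.1 i - m.2 i, if m.1 then v.2 - 1 else v.2 + 1)

def upSites : Site k → List (Move k) → Finset (Site k)
  | _, [] => ∅
  | v, m :: ms =>
    if m.1 then insert v (upSites (stepBack v m) ms) else upSites (stepBack v m) ms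

def Reachable (c : Site k → Prop) (v : Site k) : Prop :=
  ∃ ms : List (Move k), (ms.foldl stepBack v).2 ≤ 0 ∧ ∀ u ∈ upSites v ms, c u

lemma upSites_append (v : Site k) (l₁ l₂ : List (Move k)) :
    upSites v (l₁ ++ l₂) = upSites v l₁ ∪ upSites (l₁.foldl stepBack v) l₂ := by
  induction l₁ generalizing v with
  | nil => simp [upSites]
  | cons m l₁ ih =>
    by_cases hm : m.1 <;> simp [upSites, hm, ih, Finset.insert_union]

lemma mem_scanl_of_mem_upSites {v u : Site k} {ms : List (Move k)} (hu : u ∈ upSites v ms) :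
    u ∈ ms.scanl stepBack v := by
  induction ms generalizing v with
  | nil => simp [upSites] at hu
  | cons m ms ih =>
    rw [List.scanl_cons, List.mem_cons]
    cases hm : m.1 <;> simp only [upSites, hm, Bool.false_eq_true, if_false, if_true,
      Finset.mem_insert] at hu
    · exact Or.inr (ih hu)
    · exact hu.imp id ih

lemma card_upSites (v : Site k) {ms : List (Move k)} (hms : (ms.scanl stepBack v).Nodup) :
    (upSites v ms).card = ms.countP (·.1) := by
  induction ms generalizing v with
  | nil => rfl
  | cons m ms ih =>
    rw [List.scanl_cons, List.nodup_cons] at hms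
    have hv : v ∉ upSites (stepBack v m) ms := fun h => hms.1 (mem_scanl_of_mem_upSites h)
    by_cases hm : m.1 <;> simp [upSites, hm, ih _ hms.2, Finset.card_insert_of_notMem hv]

lemma height_foldl_stepBack (v : Site k) (ms : List (Move k)) :
    (ms.foldl stepBack v).2 + 2 * ms.countP (·.1) = v.2 + ms.length := by
  induction ms generalizing v with
  | nil => simp
  | cons m ms ih =>
    have h := ih (stepBack v m)
    have hstep : (stepBack v m).2 = if m.1 then v.2 - 1 else v.2 + 1 := rfl
    cases hm : m.1 <;> simp [hstep, hm] at h ⊢ <;> omega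

lemma exists_shorter_of_not_nodup {v : Site k} {ms : List (Move k)}
    (hms : ¬ (ms.scanl stepBack v).Nodup) :
    ∃ ms' : List (Move k), ms'.length < ms.length ∧
      ms'.foldl stepBack v = ms.foldl stepBack v ∧ upSites v ms' ⊆ upSites v ms := by
  rw [List.Nodup, List.pairwise_iff_getElem] at hms
  push Not at hms
  obtain ⟨i, j, hi, hj, hij, hloop⟩ := hms
  rw [List.getElem_scanl, List.getElem_scanl] at hloop
  rw [List.length_scanl] at hi hj
  have hsplit (n : ℕ) :=
    (List.take_append_drop n ms) ▸ upSites_append v (ms.take n) (ms.drop n)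
  refine ⟨ms.take i ++ ms.drop j, by simp; omega, ?_, ?_⟩
  · rw [List.foldl_append, hloop, ← List.foldl_append, List.take_append_drop]
  · rw [upSites_append, hloop]
    exact Finset.union_subset (hsplit i ▸ Finset.subset_union_left)
      (hsplit j ▸ Finset.subset_union_right)

variable {c : Site k → Prop}

/-- A shortest path is self-avoiding: a loop could be cut out of it. -/
lemma Reachable.exists_nodup {v : Site k} (hv : Reachable c v) :
    ∃ ms : List (Move k), (ms.scanl stepBack v).Nodup ∧
      (ms.foldl stepBack v).2 ≤ 0 ∧ ∀ u ∈ upSites v ms, c u := by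
  obtain ⟨ms, hms, hmin⟩ := (measure List.length).wf.has_min
    {ms | (ms.foldl stepBack v).2 ≤ 0 ∧ ∀ u ∈ upSites v ms, c u} hv
  refine ⟨ms, by_contra fun hnd => ?_, hms⟩
  obtain ⟨ms', hlt, hend, hsub⟩ := exists_shorter_of_not_nodup hnd
  exact hmin ms' ⟨hend ▸ hms.1, fun u hu => hms.2 u (hsub hu)⟩ hlt

lemma reachable_of_height_nonpos {v : Site k} (hv : v.2 ≤ 0) : Reachable c v :=
  ⟨[], hv, by simp [upSites]⟩

lemma Reachable.of_stepBack {v : Site k} (m : Move k) (hc : m.1 = true → c v)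
    (hv : Reachable c (stepBack v m)) : Reachable c v := by
  obtain ⟨ms, hend, hup⟩ := hv
  refine ⟨m :: ms, hend, ?_⟩
  cases hm : m.1
  · simpa [upSites, hm] using hup
  · simpa [upSites, hm, hc hm] using hup

lemma Reachable.stepDown {x y : Fin k → ℤ} {h : ℤ} (hxy : ∀ i, |x i - y i| ≤ 1)
    (hx : Reachable c (x, h)) : Reachable c (y, h - 1) := by
  refine Reachable.of_stepBack (false, fun i => ⟨y i - x i, ?_⟩) (by simp) ?_
  · have := abs_le.1 (hxy i)
    constructor <;> linarith
  · convert hx using 1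
    simp [stepBack]

lemma Reachable.of_le {x : Fin k → ℤ} {h h' : ℤ} (hh : h' ≤ h) (hx : Reachable c (x, h)) :
    Reachable c (x, h') :=
  Int.leInductionDown (motive := fun n _ => Reachable c (x, n)) hx
    (fun _ _ hn => hn.stepDown (by simp)) h' hh

lemma Reachable.stepUp {x : Fin k → ℤ} {h : ℤ} (hc : c (x, h)) (hx : Reachable c (x, h - 1)) :
    Reachable c (x, h) := by
  refine Reachable.of_stepBack (true, fun _ => ⟨0, by norm_num⟩) (fun _ => hc) ?_
  convert hx using 1
  simp [stepBack]

/-- `F x` is the lowest unreachable site of the column over `x`. -/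
theorem exists_lipschitz_surface_avoiding (c : Site k → Prop)
    (hc : ∀ x : Fin k → ℤ, ∃ h : ℕ, ¬ Reachable c (x, h)) :
    ∃ F : (Fin k → ℤ) → ℤ, (∀ x y, (∀ i, |x i - y i| ≤ 1) → |F x - F y| ≤ 1) ∧
      ∀ x, ¬ c (x, F x) := by
  have hmin (x : Fin k → ℤ) : ∃ lb : ℤ, ¬ Reachable c (x, lb) ∧
      ∀ z : ℤ, ¬ Reachable c (x, z) → lb ≤ z := by
    refine Int.exists_least_of_bdd ⟨0, fun z hz => ?_⟩ ((hc x).elim fun h hh => ⟨h, hh⟩)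
    by_contra hneg
    exact hz (reachable_of_height_nonpos (by simp; omega))
  choose F hF hFmin using hmin
  have hbelow (x : Fin k → ℤ) : Reachable c (x, F x - 1) := by
    by_contra hx
    linarith [hFmin x _ hx]
  have hstep (x y : Fin k → ℤ) (hxy : ∀ i, |x i - y i| ≤ 1) : F x ≤ F y + 1 := by
    by_contra! hlt
    exact hF y (((hbelow x).stepDown hxy).of_le (by omega))
  refine ⟨F, fun x y hxy => abs_le.2 ⟨?_, ?_⟩, fun x hx => hF x ((hbelow x).stepUp hx)⟩
  · linarith [hstep y x fun i => abs_sub_comm (x i) (y i) ▸ hxy i]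
  · linarith [hstep x y hxy]

lemma lt_one_of_card_mul_lt_one {r : ℝ≥0∞} (hr : Fintype.card (Move k) * r < 1) : r < 1 :=
  (le_mul_of_one_le_left' (Nat.one_le_cast.2
    (Fintype.card_pos_iff.2 ⟨(true, fun _ => ⟨0, by norm_num⟩)⟩))).trans_lt hr

section Probability

variable {Ω : Type*} [MeasurableSpace Ω] {P : Measure Ω} [IsProbabilityMeasure P]
  {X : Site k → Ω → Bool} {r : ℝ≥0∞}

/-- A self-avoiding path of length `n` down from height `h` has at least `(h + n) / 2` distinct
up-sites. -/
lemma measure_upSites_closed_le (hX : iIndepFun X P)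
    (hq : ∀ v, P {ω | X v ω = false} = r ^ 2) (x : Fin k → ℤ) (h : ℕ) {ms : List (Move k)}
    (hnd : (ms.scanl stepBack (x, h)).Nodup) (hend : (ms.foldl stepBack (x, h)).2 ≤ 0) :
    P {ω | ∀ u ∈ upSites (x, h) ms, X u ω = false} ≤ r ^ (h + ms.length) := by
  have hr : r ≤ 1 := (pow_le_one_iff two_ne_zero).1 (hq (x, h) ▸ prob_le_one)
  have hheight := height_foldl_stepBack (x, h) ms
  calc P {ω | ∀ u ∈ upSites (x, h) ms, X u ω = false}
      = (r ^ 2) ^ (ms.countP (·.1)) := by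
        rw [measure_forall_eq_pow hX hq, card_upSites _ hnd]
    _ ≤ r ^ (h + ms.length) := by
        rw [← pow_mul]
        exact pow_le_pow_right_of_le_one' hr (by simp only at hheight; omega)

lemma measure_reachable_le (hX : iIndepFun X P) (hq : ∀ v, P {ω | X v ω = false} = r ^ 2)
    (x : Fin k → ℤ) (h : ℕ) :
    P {ω | Reachable (fun v => X v ω = false) (x, h)} ≤
      r ^ h * ∑' n : ℕ, (Fintype.card (Move k) * r) ^ n := by
  let E (ms : List (Move k)) : Set Ω := {ω | (ms.scanl stepBack (x, h)).Nodup ∧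
    (ms.foldl stepBack (x, h)).2 ≤ 0 ∧ ∀ u ∈ upSites (x, h) ms, X u ω = false}
  have hE (ms : List (Move k)) : P (E ms) ≤ r ^ (h + ms.length) := by
    by_cases hms : (ms.scanl stepBack (x, h)).Nodup ∧ (ms.foldl stepBack (x, h)).2 ≤ 0
    · exact (measure_mono fun ω hω => hω.2.2).trans
        (measure_upSites_closed_le hX hq x h hms.1 hms.2)
    · have : E ms = ∅ := Set.eq_empty_of_forall_notMem fun ω hω => hms ⟨hω.1, hω.2.1⟩
      simp [this]
  calc P {ω | Reachable (fun v => X v ω = false) (x, h)}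
      ≤ P (⋃ ms, E ms) := measure_mono fun ω hω => Set.mem_iUnion.2 hω.exists_nodup
    _ ≤ ∑' ms, r ^ (h + ms.length) := (measure_iUnion_le E).trans (ENNReal.tsum_le_tsum hE)
    _ = r ^ h * ∑' n : ℕ, (Fintype.card (Move k) * r) ^ n := by
        simp only [pow_add, ENNReal.tsum_mul_left, tsum_pow_length]

theorem ae_forall_exists_not_reachable (hX : iIndepFun X P)
    (hq : ∀ v, P {ω | X v ω = false} = r ^ 2) (hr : Fintype.card (Move k) * r < 1) :
    ∀ᵐ ω ∂P, ∀ x : Fin k → ℤ, ∃ h : ℕ, ¬ Reachable (fun v => X v ω = false) (x, h) := by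
  rw [ae_all_iff]
  intro x
  have hK : ∑' n : ℕ, (Fintype.card (Move k) * r) ^ n ≠ ⊤ := by
    rw [ENNReal.tsum_geometric]
    exact ENNReal.inv_ne_top.2 (tsub_pos_of_lt hr).ne'
  have hlim : Tendsto (fun h : ℕ => r ^ h * ∑' n : ℕ, (Fintype.card (Move k) * r) ^ n)
      atTop (𝓝 0) := by
    have hr1 := lt_one_of_card_mul_lt_one hr
    simpa using ENNReal.Tendsto.mul_const (ENNReal.tendsto_pow_atTop_nhds_zero_of_lt_one hr1)
      (Or.inr hK)
  rw [ae_iff]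
  push Not
  refine le_antisymm (ge_of_tendsto' hlim fun h => ?_) zero_le
  exact (measure_reachable_le hX hq x h).trans' (measure_mono fun ω hω => hω h)

end Probability

end LipschitzPercolation

open LipschitzPercolation in
theorem lipschitz_percolation_general {d : ℕ} :
    ∃ p : ℝ, p < 1 ∧
      ∀ (Ω : Type) (mΩ : MeasurableSpace Ω) (P : Measure Ω),
        IsProbabilityMeasure P →
        ∀ X : (Fin (d - 1) → ℤ) × ℤ → Ω → Bool,
        (∀ v, Measurable (X v)) →
        iIndepFun X P →
        (∀ v, P {ω | X v ω = true} = ENNReal.ofReal p) →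
        ∀ᵐ ω ∂P, ∃ F : (Fin (d - 1) → ℤ) → ℤ,
          (∀ x y : Fin (d - 1) → ℤ, (∑ i, |x i - y i|) = 1 → |F x - F y| ≤ 1) ∧
          ∀ x : Fin (d - 1) → ℤ, X (x, F x) ω = true := by
  obtain ⟨r, hr0, hrC⟩ := exists_pos_mul_lt one_pos (Fintype.card (Move (d - 1)) : ℝ≥0)
  have hrC' : (Fintype.card (Move (d - 1)) : ℝ≥0∞) * r < 1 := by exact_mod_cast hrC
  have hr1 : (r : ℝ) ^ 2 ≤ 1 :=
    pow_le_one₀ r.coe_nonneg (by exact_mod_cast (lt_one_of_card_mul_lt_one hrC').le)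
  refine ⟨1 - (r : ℝ) ^ 2, sub_lt_self 1 (pow_pos (NNReal.coe_pos.2 hr0) 2), ?_⟩
  intro Ω _ P _ X hXm hX hp
  have hq (v : Site (d - 1)) : P {ω | X v ω = false} = (r : ℝ≥0∞) ^ 2 := by
    have hcompl : {ω | X v ω = false} = {ω | X v ω = true}ᶜ := by ext; simp
    have hmeas : MeasurableSet {ω | X v ω = true} := hXm v (measurableSet_singleton true)
    rw [hcompl, prob_compl_eq_one_sub hmeas, hp v,
      ← ENNReal.ofReal_one, ← ENNReal.ofReal_sub _ (sub_nonneg.2 hr1), sub_sub_cancel,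
      ENNReal.ofReal_pow r.coe_nonneg, ENNReal.ofReal_coe_nnreal]
  filter_upwards [ae_forall_exists_not_reachable hX hq hrC'] with ω hω
  obtain ⟨F, hF, hopen⟩ := exists_lipschitz_surface_avoiding _ hω
  refine ⟨F, fun x y hxy => hF x y fun i => ?_, fun x => by simpa using hopen x⟩
  exact hxy ▸ Finset.single_le_sum (fun j _ => abs_nonneg (x j - y j)) (Finset.mem_univ i)

/-- **Lipschitz percolation (Dirr–Dondl–Grimmett–Holroyd–Scheutzow)**: for site percolation
on `ℤ^d = ℤ^{d-1} × ℤ` (`d ≥ 2`) there exists `p < 1` such that, whenever each site is open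
independently with probability `p`, almost surely there is a Lipschitz function
`F : ℤ^{d-1} → ℤ` (with `|F(x) - F(y)| ≤ 1` for neighbouring `x, y`) all of whose graph
sites `(x, F(x))` are open. -/
theorem lipschitz_percolation {d : ℕ} (hd : 2 ≤ d) :
    ∃ p : ℝ, p < 1 ∧
      ∀ (Ω : Type) (mΩ : MeasurableSpace Ω) (P : Measure Ω),
        IsProbabilityMeasure P →
        ∀ X : (Fin (d - 1) → ℤ) × ℤ → Ω → Bool,
        (∀ v, Measurable (X v)) →
        iIndepFun X P →
        (∀ v, P {ω | X v ω = true} = ENNReal.ofReal p) →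
        ∀ᵐ ω ∂P, ∃ F : (Fin (d - 1) → ℤ) → ℤ,
          (∀ x y : Fin (d - 1) → ℤ, (∑ i, |x i - y i|) = 1 → |F x - F y| ≤ 1) ∧
          ∀ x : Fin (d - 1) → ℤ, X (x, F x) ω = true :=
  lipschitz_percolation_general
end
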